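/- arXiv:1703.01907 — 2 statements merged into one kernel-verified Lean document; each statement's English description precedes it below -/
import Mathlib

section
/- For every real x and real λ ≠ 0, the function G(x) = x · ∑_{n=0}^∞ [(1/2)_n / ((3/2)_n (3/2)_n)] · (−λ²x²/4)ⁿ / n! is differentiable and satisfies G'(x) = sin(λx)/(λx) for x ≠ 0 (with G'(0) = 1), i.e., G is an antiderivative of sin(λx)/(λx). -/
/-!
Since `(1/2)_n (2n+1) = (3/2)_n` and `(3/2)_n 4^n n! = (2n+1)!`, the series is
`G(y) = ∑ (-1)^n λ^{2n} y^{2n+1} / ((2n+1) (2n+1)!)`, the termwise antiderivative of the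
Taylor series `∑ (-1)^n (λy)^{2n} / (2n+1)!` of `sinc (λy)`. Termwise differentiation is justified
on every bounded interval by domination with `r^{2n} / (2n+1)!`.
-/

noncomputable def poch (a : ℝ) (n : ℕ) : ℝ := ∏ i ∈ Finset.range n, (a + (i : ℝ))

open Real Nat

lemma poch_succ (a : ℝ) (n : ℕ) : poch a (n + 1) = poch a n * (a + n) :=
  Finset.prod_range_succ _ _

lemma poch_pos {a : ℝ} (ha : 0 < a) (n : ℕ) : 0 < poch a n :=
  Finset.prod_pos fun _ _ => by positivity

lemma poch_one_half_mul (n : ℕ) : poch (1/2) n * (2 * n + 1) = poch (3/2) n := by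
  induction n with
  | zero => simp [poch]
  | succ n ih =>
    rw [poch_succ, poch_succ]
    push_cast
    linear_combination (3/2 + (n : ℝ)) * ih

lemma poch_three_halves_mul_four_pow_mul_factorial (n : ℕ) :
    poch (3/2) n * (4 ^ n * n !) = (2 * n + 1)! := by
  induction n with
  | zero => simp [poch]
  | succ n ih =>
    rw [poch_succ, show 2 * (n + 1) + 1 = 2 * n + 1 + 1 + 1 by ring, factorial_succ,
      factorial_succ, factorial_succ, pow_succ]
    push_cast
    linear_combination (3/2 + (n : ℝ)) * 4 * ((n : ℝ) + 1) * ih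

lemma mul_hypergeometric_term_eq (l y : ℝ) (n : ℕ) :
    y * (poch (1/2) n / (poch (3/2) n * poch (3/2) n) * (-(l ^ 2 * y ^ 2) / 4) ^ n / n !) =
      (-1) ^ n * l ^ (2 * n) * y ^ (2 * n + 1) / ((2 * n + 1) * (2 * n + 1)!) := by
  have : poch (1/2) n ≠ 0 := (poch_pos (by norm_num) n).ne'
  rw [← poch_three_halves_mul_four_pow_mul_factorial, ← poch_one_half_mul, neg_div, neg_pow, div_pow, mul_pow, ← pow_mul, ← pow_mul]
  field_simp
  ring

lemma Real.hasSum_sinc (z : ℝ) :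
    HasSum (fun n : ℕ => (-1) ^ n * z ^ (2 * n) / (2 * n + 1)!) (sinc z) := by
  rcases eq_or_ne z 0 with rfl | hz
  · rw [sinc_zero]
    convert hasSum_ite_eq 0 (1 : ℝ) using 1
    ext n
    rcases n with _ | n <;> simp
  · rw [sinc_of_ne_zero hz]
    have hterm (n : ℕ) : (-1) ^ n * z ^ (2 * n + 1) / (2 * n + 1)! / z =
        (-1) ^ n * z ^ (2 * n) / (2 * n + 1)! := by
      rw [pow_succ]
      field_simp
    simpa only [hterm] using (hasSum_sin z).div_const z

lemma summable_pow_two_mul_div_factorial_succ (r : ℝ) :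
    Summable fun n : ℕ => r ^ (2 * n) / (2 * n + 1)! := by
  have h := (summable_pow_div_factorial |r|).comp_injective (mul_right_injective₀ two_ne_zero)
  refine .of_norm_bounded h fun n => ?_
  rw [norm_div, norm_pow, Real.norm_eq_abs, RCLike.norm_natCast]
  exact div_le_div_of_nonneg_left (by positivity) (by positivity)
    (mod_cast factorial_le (Nat.le_succ _))

lemma hasDerivAt_sinIntegral_term (l y : ℝ) (n : ℕ) :
    HasDerivAt (fun y => (-1) ^ n * l ^ (2 * n) * y ^ (2 * n + 1) / ((2 * n + 1) * (2 * n + 1)!))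
      ((-1) ^ n * (l * y) ^ (2 * n) / (2 * n + 1)!) y := by
  refine (((hasDerivAt_pow (2 * n + 1) y).const_mul ((-1) ^ n * l ^ (2 * n))).div_const
    ((2 * n + 1) * (2 * n + 1)! : ℝ)).congr_deriv ?_
  rw [Nat.add_sub_cancel]
  push_cast
  field_simp
  ring

lemma hasDerivAt_tsum_sinIntegral_term (l x : ℝ) :
    HasDerivAt
      (fun y => ∑' n : ℕ, (-1) ^ n * l ^ (2 * n) * y ^ (2 * n + 1) / ((2 * n + 1) * (2 * n + 1)!))
      (sinc (l * x)) x := by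
  set R := |x| + 1
  have hx : x ∈ Metric.ball 0 R := by simp [R]
  have hbound : ∀ (n : ℕ) y, y ∈ Metric.ball (0 : ℝ) R →
      ‖(-1) ^ n * (l * y) ^ (2 * n) / (2 * n + 1)!‖ ≤ (|l| * R) ^ (2 * n) / (2 * n + 1)! := by
    intro n y hy
    rw [mem_ball_zero_iff, Real.norm_eq_abs] at hy
    rw [norm_div, norm_mul, norm_pow, norm_pow, norm_neg, norm_one, one_pow, one_mul,
      RCLike.norm_natCast, Real.norm_eq_abs, abs_mul]
    gcongr
  rw [← (hasSum_sinc (l * x)).tsum_eq]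
  exact hasDerivAt_tsum_of_isPreconnected (summable_pow_two_mul_div_factorial_succ _)
    Metric.isOpen_ball (convex_ball 0 R).isPreconnected
    (fun n y _ => hasDerivAt_sinIntegral_term l y n) hbound (Metric.mem_ball_self (by positivity))
    (by simp) hx

theorem stmt_0 (l : ℝ) (hl : l ≠ 0) (x : ℝ) :
    HasDerivAt (fun y : ℝ => y * ∑' n : ℕ,
        poch (1/2) n / (poch (3/2) n * poch (3/2) n) *
          (-(l ^ 2 * y ^ 2) / 4) ^ n / (n.factorial : ℝ))
      (if x = 0 then 1 else Real.sin (l * x) / (l * x)) x := by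
  have hsinc : (if x = 0 then 1 else Real.sin (l * x) / (l * x)) = sinc (l * x) := by
    simp [sinc, hl]
  simp_rw [hsinc, ← tsum_mul_left, mul_hypergeometric_term_eq]
  exact hasDerivAt_tsum_sinIntegral_term l x
end

section
/- Let β ≥ 1 and λ ≠ 0. For x > 0, the function G(x) = (1/λ) ln x − (λ x^{2β}/(4β)) · ∑_{n=0}^∞ [ ((1)_n (1)_n) / ((3/2)_n (2)_n (2)_n) ] (−λ²x^{2β}/4)ⁿ/n! satisfies G'(x) = cos(λx^β)/(λx). -/
open Real
open scoped Nat

lemma poch_one (n : ℕ) : poch 1 n = n ! := by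
  induction n with
  | zero => simp [poch]
  | succ k ih => rw [poch, Finset.prod_range_succ, ← poch, ih]; push_cast [Nat.factorial_succ]; ring

lemma poch_two (n : ℕ) : poch 2 n = (n + 1)! := by
  induction n with
  | zero => simp [poch]
  | succ k ih => rw [poch, Finset.prod_range_succ, ← poch, ih]; push_cast [Nat.factorial_succ]; ring

lemma poch_three_halves_mul (n : ℕ) : poch (3 / 2) n * (4 ^ n * n !) = (2 * n + 1)! := by
  induction n with
  | zero => simp [poch]
  | succ k ih =>
    rw [poch, Finset.prod_range_succ, ← poch, show 2 * (k + 1) + 1 = 2 * k + 1 + 1 + 1 by ring,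
      Nat.factorial_succ, Nat.factorial_succ, Nat.factorial_succ]
    push_cast
    linear_combination (4 * (3 / 2 + (k : ℝ)) * (k + 1)) * ih

/-- The entire cosine integral `Cin z = ∫₀ᶻ (1 - cos t) / t dt`, by its Taylor series. -/
noncomputable def cin (z : ℝ) : ℝ :=
  ∑' n : ℕ, (-1) ^ n * z ^ (2 * n + 2) / ((2 * n + 2 : ℕ) * (2 * n + 2)! : ℝ)

noncomputable def hyp2F3 (w : ℝ) : ℝ :=
  ∑' n : ℕ, poch 1 n * poch 1 n / (poch (3 / 2) n * poch 2 n * poch 2 n) * w ^ n / (n ! : ℝ)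

lemma sq_mul_hyp2F3 (a : ℝ) : a ^ 2 * hyp2F3 (-(a ^ 2) / 4) = 4 * cin a := by
  rw [hyp2F3, cin, ← tsum_mul_left, ← tsum_mul_left]
  refine tsum_congr fun n => ?_
  have h32 : poch (3 / 2) n = (2 * n + 1)! / (4 ^ n * n !) := by
    rw [← poch_three_halves_mul]; field_simp
  rw [poch_one, poch_two, h32, neg_div, neg_pow, div_pow, show 2 * n + 2 = 2 * n + 1 + 1 by ring]
  push_cast [Nat.factorial_succ]
  field_simp
  ring

lemma hasSum_one_sub_cos (z : ℝ) :
    HasSum (fun n : ℕ => (-1) ^ n * z ^ (2 * n + 2) / ((2 * n + 2)! : ℝ)) (1 - cos z) := by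
  have h := ((hasSum_nat_add_iff' 1).mpr (Real.hasSum_cos z)).neg
  rw [show -(cos z - ∑ i ∈ Finset.range 1, (-1) ^ i * z ^ (2 * i) / ((2 * i)! : ℝ)) = 1 - cos z by
    simp] at h
  refine h.congr_fun fun n => ?_
  rw [show 2 * (n + 1) = 2 * n + 2 by ring, pow_succ]
  ring

lemma hasSum_one_sub_cos_div (z : ℝ) :
    HasSum (fun n : ℕ => (-1) ^ n * z ^ (2 * n + 1) / ((2 * n + 2)! : ℝ)) ((1 - cos z) / z) := by
  rcases eq_or_ne z 0 with rfl | hz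
  · simp [hasSum_zero]
  refine ((hasSum_one_sub_cos z).div_const z).congr_fun fun n => ?_
  rw [pow_succ _ (2 * n + 1)]
  field_simp

lemma summable_pow_odd_div_factorial (R : ℝ) :
    Summable (fun n : ℕ => R ^ (2 * n + 1) / ((2 * n + 1)! : ℝ)) :=
  (Real.summable_pow_div_factorial R).comp_injective (fun m n h => by simpa using h)

theorem hasDerivAt_cin (z : ℝ) : HasDerivAt cin ((1 - cos z) / z) z := by
  set R := |z| + 1
  have hderiv : ∀ n (w : ℝ), HasDerivAt
      (fun w => (-1) ^ n * w ^ (2 * n + 2) / ((2 * n + 2 : ℕ) * (2 * n + 2)! : ℝ))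
      ((-1) ^ n * w ^ (2 * n + 1) / ((2 * n + 2)! : ℝ)) w := by
    intro n w
    refine (((hasDerivAt_pow (2 * n + 2) w).const_mul ((-1) ^ n)).div_const
      ((2 * n + 2 : ℕ) * (2 * n + 2)! : ℝ)).congr_deriv ?_
    rw [show 2 * n + 2 - 1 = 2 * n + 1 by omega]
    field_simp
  have hbound : ∀ n (w : ℝ), w ∈ Metric.ball 0 R →
      ‖(-1) ^ n * w ^ (2 * n + 1) / ((2 * n + 2)! : ℝ)‖ ≤ R ^ (2 * n + 1) / ((2 * n + 1)! : ℝ) := by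
    intro n w hw
    rw [mem_ball_zero_iff] at hw
    rw [norm_div, norm_mul, norm_pow, norm_neg, norm_one, one_pow, one_mul, norm_pow,
      Real.norm_natCast]
    gcongr
    norm_num
  have := hasDerivAt_tsum_of_isPreconnected (summable_pow_odd_div_factorial R) Metric.isOpen_ball
    (convex_ball 0 R).isPreconnected (fun n w _ => hderiv n w) hbound
    (Metric.mem_ball_self (by positivity)) (by simp) (y := z) (by simp [R])
  rwa [(hasSum_one_sub_cos_div z).tsum_eq] at this

lemma hasDerivAt_log_sub_cin_rpow {β l x : ℝ} (hβ : β ≠ 0) (hl : l ≠ 0) (hx : 0 < x) :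
    HasDerivAt (fun y => (1 / l) * log y - cin (l * y ^ β) / (β * l))
      (cos (l * x ^ β) / (l * x)) x := by
  have hinner := (hasDerivAt_rpow_const (p := β) (Or.inl hx.ne')).const_mul l
  have h := ((hasDerivAt_log hx.ne').const_mul (1 / l)).sub
    (((hasDerivAt_cin (l * x ^ β)).comp x hinner).div_const (β * l))
  refine h.congr_deriv ?_
  have hxβ : x ^ β ≠ 0 := (rpow_pos_of_pos hx β).ne'
  rw [rpow_sub_one hx.ne']
  field_simp
  ring

lemma mul_hyp2F3_eq_cin_div {β l y : ℝ} (hl : l ≠ 0) (hy : 0 ≤ y) :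
    l * y ^ (2 * β) / (4 * β) * hyp2F3 (-(l ^ 2 * y ^ (2 * β)) / 4) =
      cin (l * y ^ β) / (β * l) := by
  have key := sq_mul_hyp2F3 (l * y ^ β)
  rw [mul_pow, ← rpow_mul_natCast hy, Nat.cast_ofNat, mul_comm β 2] at key
  calc l * y ^ (2 * β) / (4 * β) * hyp2F3 (-(l ^ 2 * y ^ (2 * β)) / 4)
      = l ^ 2 * y ^ (2 * β) * hyp2F3 (-(l ^ 2 * y ^ (2 * β)) / 4) / (4 * β * l) := by
        field_simp
    _ = cin (l * y ^ β) / (β * l) := by rw [key]; ring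

theorem stmt_13 (β l : ℝ) (hβ : 1 ≤ β) (hl : l ≠ 0) (x : ℝ) (hx : 0 < x) :
    HasDerivAt (fun y : ℝ => (1 / l) * Real.log y -
        l * y ^ (2 * β) / (4 * β) *
          ∑' n : ℕ, poch 1 n * poch 1 n /
            (poch (3/2) n * poch 2 n * poch 2 n) *
            (-(l ^ 2 * y ^ (2 * β)) / 4) ^ n / (n.factorial : ℝ))
      (Real.cos (l * x ^ β) / (l * x)) x := by
  refine (hasDerivAt_log_sub_cin_rpow (zero_lt_one.trans_le hβ).ne' hl hx).congr_of_eventuallyEq ?_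
  filter_upwards [Ioi_mem_nhds hx] with y hy
  exact congrArg (_ - ·) (mul_hyp2F3_eq_cin_div hl (le_of_lt hy))
end
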